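/- Let A be an m×m real symmetric positive definite matrix, b ∈ ℝ^m, w* = A⁻¹b, and ε > 0. Consider coordinate descent with momentum: the sketch distribution takes S = e_i with probability p_i = A_{ii}/tr(A), W = A, and the momentum iterates are run with constant parameter η = 1/2 (so ζ_k = k/2, γ_k and β_k given by the constant-η schedule), starting from w^{−1} = w^0. If t ≥ 4 tr(A) / ε, then E[‖A w^t − b‖²] ≤ ε ‖w^0 − w*‖²_A, where the expectation is the weighted sum over i.i.d. index sequences with weights Π_k p_{ω_k}. -/

import Mathlib

open Matrix

/-- `uᵀ W u`, the squared `W`-norm. -/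
def normSqW {m : ℕ} (W : Matrix (Fin m) (Fin m) ℝ) (u : Fin m → ℝ) : ℝ :=
  u ⬝ᵥ (W *ᵥ u)

/-- The coordinate-descent-with-momentum iterates (η = 1/2, ζ_k = k(1−η) = k/2,
`W = A`, sketch `S = e_i`) driven by a finite index sequence `σ : Fin t → Fin m`.
`cdMomIter … t σ = (z^{t-1}, w^t)` with `(z^{-1}, w⁰) = (w⁰, w⁰)`,
`z^t = z^{t-1} − (1/2) ∇_A f_{e_{σ_t}}(w^t)` where
`∇_A f_{e_i}(w) = ((A w − b)_i / A_{ii}) e_i`, and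
`w^{t+1} = (1 − 1/(ζ_{t+1}+1)) w^t + (1/(ζ_{t+1}+1)) z^t`. -/
noncomputable def cdMomIter {m : ℕ} (A : Matrix (Fin m) (Fin m) ℝ) (b w0 : Fin m → ℝ) :
    (t : ℕ) → (Fin t → Fin m) → ((Fin m → ℝ) × (Fin m → ℝ))
  | 0, _ => (w0, w0)
  | t + 1, σ =>
      let zw := cdMomIter A b w0 t (fun k => σ k.castSucc)
      let i := σ (Fin.last t)
      let z' := zw.1 -
        (1 / 2 : ℝ) • (((A *ᵥ zw.2 - b) i / A i i) • (Pi.single i 1 : Fin m → ℝ))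
      (z', (1 - 1 / (((t : ℝ) + 1) / 2 + 1)) • zw.2 + (1 / (((t : ℝ) + 1) / 2 + 1)) • z')

namespace CDMomAux

variable {m : ℕ}

lemma dot_symm (A : Matrix (Fin m) (Fin m) ℝ) (hs : ∀ i j, A i j = A j i)
    (x y : Fin m → ℝ) : x ⬝ᵥ (A *ᵥ y) = y ⬝ᵥ (A *ᵥ x) := by
  simp only [dotProduct, mulVec, Finset.mul_sum]
  rw [Finset.sum_comm]
  exact Finset.sum_congr rfl fun i _ => Finset.sum_congr rfl fun j _ => by
    rw [hs j i]; ring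

lemma sym_of_posSemidef {A : Matrix (Fin m) (Fin m) ℝ} (hA : A.PosSemidef) :
    ∀ i j, A i j = A j i := by
  intro i j
  have h := hA.1
  rw [Matrix.IsHermitian] at h
  conv_lhs => rw [← h]
  simp [Matrix.conjTranspose_apply]

lemma diag_pos {A : Matrix (Fin m) (Fin m) ℝ} (hA : A.PosDef) (i : Fin m) :
    0 < A i i := by
  have h := hA.dotProduct_mulVec_pos (x := Pi.single i 1) (by
    intro h
    have := congrFun h i
    simp at this)
  simpa [single_dotProduct, Matrix.mulVec_single_one] using h

lemma nA_nonneg {A : Matrix (Fin m) (Fin m) ℝ} (hA : A.PosSemidef) (u : Fin m → ℝ) :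
    0 ≤ normSqW A u := by
  simpa [normSqW] using hA.dotProduct_mulVec_nonneg u

lemma dot_self_nonneg (u : Fin m → ℝ) : 0 ≤ u ⬝ᵥ u :=
  Finset.sum_nonneg fun i _ => mul_self_nonneg _

/-- key spectral bound `‖A u‖² ≤ tr(A) ⟨u, A u⟩` for PSD `A`. -/
lemma mulVec_dot_le {A : Matrix (Fin m) (Fin m) ℝ} (hA : A.PosSemidef) (u : Fin m → ℝ) :
    (A *ᵥ u) ⬝ᵥ (A *ᵥ u) ≤ A.trace * (u ⬝ᵥ (A *ᵥ u)) := by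
  obtain ⟨C, hCpsd, hCC⟩ : ∃ C : Matrix (Fin m) (Fin m) ℝ, C.PosSemidef ∧ C * C = A := by
    open scoped MatrixOrder in
    exact ⟨CFC.sqrt A, (Matrix.nonneg_iff_posSemidef).mp (CFC.sqrt_nonneg A),
      CFC.sqrt_mul_sqrt_self A ((Matrix.nonneg_iff_posSemidef).mpr hA)⟩
  have hCsym : ∀ i j, C i j = C j i := sym_of_posSemidef hCpsd
  set y := C *ᵥ u with hy
  have hAu : A *ᵥ u = C *ᵥ y := by rw [hy, Matrix.mulVec_mulVec, hCC]
  have hyy : y ⬝ᵥ y = u ⬝ᵥ (A *ᵥ u) := by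
    rw [hy, dot_symm C hCsym (C *ᵥ u) u, Matrix.mulVec_mulVec, hCC]
  have htr : A.trace = ∑ i, ∑ j, (C i j)^2 := by
    rw [← hCC, Matrix.trace]
    refine Finset.sum_congr rfl fun i _ => ?_
    simp only [Matrix.diag_apply, Matrix.mul_apply]
    exact Finset.sum_congr rfl fun j _ => by rw [hCsym j i]; ring
  rw [← hyy, htr, hAu]
  have expand : (C *ᵥ y) ⬝ᵥ (C *ᵥ y) = ∑ i, (∑ j, C i j * y j)^2 := by
    simp [dotProduct, mulVec, sq]
  rw [expand]
  have hy2 : y ⬝ᵥ y = ∑ j, (y j)^2 := by simp [dotProduct, sq]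
  rw [hy2, Finset.sum_mul]
  exact Finset.sum_le_sum fun i _ =>
    Finset.sum_mul_sq_le_sq_mul_sq Finset.univ (fun j => C i j) y

lemma normSq_expand (A : Matrix (Fin m) (Fin m) ℝ) (hs : ∀ i j, A i j = A j i)
    (v : Fin m → ℝ) (c : ℝ) (i : Fin m) :
    normSqW A (v - c • (Pi.single i 1 : Fin m → ℝ))
      = normSqW A v - 2 * c * (A *ᵥ v) i + c^2 * A i i := by
  unfold normSqW
  rw [Matrix.mulVec_sub, sub_dotProduct, dotProduct_sub, dotProduct_sub]
  rw [dot_symm A hs v (c • (Pi.single i 1 : Fin m → ℝ))]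
  rw [Matrix.mulVec_smul]
  simp only [smul_dotProduct, dotProduct_smul, smul_eq_mul,
    single_dotProduct, Matrix.mulVec_single_one, Pi.smul_apply]
  simp only [Matrix.col_apply]
  ring_nf

/-- The single-step potential inequality (deterministic, fixed sample `i`). -/
lemma step_ineq (A : Matrix (Fin m) (Fin m) ℝ) (hA : A.PosDef)
    (b ws : Fin m → ℝ) (hb : A *ᵥ ws = b) (s : ℕ)
    (z wp w : Fin m → ℝ) (hzw : z - w = ((s : ℝ)/2) • (w - wp)) (i : Fin m) :
    normSqW A ((z - (1/2 : ℝ) • (((A *ᵥ w - b) i / A i i) •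
          (Pi.single i 1 : Fin m → ℝ))) - ws)
        + (((s : ℝ)+1)/4) * ((A *ᵥ w - b) i)^2 / A i i
      ≤ normSqW A (z - ws) + ((s : ℝ)/4) * ((A *ᵥ wp - b) i)^2 / A i i := by
  have hs : ∀ i j, A i j = A j i := sym_of_posSemidef hA.posSemidef
  have hd : 0 < A i i := diag_pos hA i
  set a : ℝ := (A *ᵥ w - b) i with ha
  set cp : ℝ := (A *ᵥ wp - b) i with hcp
  have hpt : (z - (1/2 : ℝ) • ((a / A i i) • (Pi.single i 1 : Fin m → ℝ))) - ws
      = (z - ws) - (a / (2 * A i i)) • (Pi.single i 1 : Fin m → ℝ) := by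
    rw [smul_smul]
    rw [sub_right_comm]
    congr 2
    field_simp
  rw [hpt, normSq_expand A hs (z - ws) _ i]
  have hMz : (A *ᵥ (z - ws)) i = (A *ᵥ z - b) i := by
    rw [Matrix.mulVec_sub, hb]
  have hrel : (A *ᵥ z - b) i = a + ((s : ℝ)/2) * (a - cp) := by
    have h1 : A *ᵥ (z - w) = ((s : ℝ)/2) • (A *ᵥ (w - wp)) := by
      rw [hzw, Matrix.mulVec_smul]
    have h2 := congrFun h1 i
    simp only [Matrix.mulVec_sub, Pi.sub_apply, Pi.smul_apply, smul_eq_mul] at h2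
    simp only [ha, hcp, Pi.sub_apply]
    linarith
  rw [hMz, hrel]
  have hsn : (0:ℝ) ≤ (s : ℝ) := Nat.cast_nonneg s
  have key : (normSqW A (z - ws) + ((s : ℝ)/4) * cp^2 / A i i)
      - (normSqW A (z - ws) - 2 * (a / (2 * A i i)) * (a + ((s:ℝ)/2) * (a - cp))
          + (a / (2 * A i i))^2 * A i i + (((s : ℝ)+1)/4) * a^2 / A i i)
      = (((s : ℝ)/4) * (a - cp)^2 + a^2 / 2) / A i i := by
    field_simp
    ring
  have hnum : 0 ≤ (((s : ℝ)/4) * (a - cp)^2 + a^2 / 2) / A i i := by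
    apply div_nonneg _ hd.le
    nlinarith [sq_nonneg (a - cp), sq_nonneg a]
  linarith [key ▸ hnum]

/-- triple `(z^{s-1}, w^{s-1}, w^s)`. -/
noncomputable def iter3 (A : Matrix (Fin m) (Fin m) ℝ) (b w0 : Fin m → ℝ) :
    (t : ℕ) → (Fin t → Fin m) → ((Fin m → ℝ) × (Fin m → ℝ) × (Fin m → ℝ))
  | 0, _ => (w0, w0, w0)
  | t + 1, σ =>
      let zw := iter3 A b w0 t (fun k => σ k.castSucc)
      let i := σ (Fin.last t)
      let z' := zw.1 -
        (1 / 2 : ℝ) • (((A *ᵥ zw.2.2 - b) i / A i i) • (Pi.single i 1 : Fin m → ℝ))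
      (z', zw.2.2,
        (1 - 1 / (((t : ℝ) + 1) / 2 + 1)) • zw.2.2 + (1 / (((t : ℝ) + 1) / 2 + 1)) • z')

lemma iter3_fst_thd (A : Matrix (Fin m) (Fin m) ℝ) (b w0 : Fin m → ℝ) :
    ∀ (t : ℕ) (σ : Fin t → Fin m),
      (iter3 A b w0 t σ).1 = (cdMomIter A b w0 t σ).1 ∧
      (iter3 A b w0 t σ).2.2 = (cdMomIter A b w0 t σ).2
  | 0, _ => ⟨rfl, rfl⟩
  | t + 1, σ => by
      obtain ⟨h1, h2⟩ := iter3_fst_thd A b w0 t (fun k => σ k.castSucc)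
      constructor <;>
        · show _ = _
          simp only [iter3, cdMomIter, h1, h2]

/-- invariant: `w^s = (1-γ_s) w^{s-1} + γ_s z^{s-1}` with `γ_s = 2/(s+2)`. -/
lemma iter3_inv (A : Matrix (Fin m) (Fin m) ℝ) (b w0 : Fin m → ℝ) :
    ∀ (t : ℕ) (σ : Fin t → Fin m),
      (iter3 A b w0 t σ).2.2 = (1 - 2/((t : ℝ)+2)) • (iter3 A b w0 t σ).2.1
        + (2/((t : ℝ)+2)) • (iter3 A b w0 t σ).1
  | 0, _ => by show w0 = _; norm_num; rfl
  | t + 1, σ => by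
      show (1 - 1 / (((t : ℝ) + 1) / 2 + 1)) • _ + (1 / (((t : ℝ) + 1) / 2 + 1)) • _ = _
      have h : (1 : ℝ) / (((t : ℝ) + 1) / 2 + 1) = 2 / ((t : ℝ) + 1 + 2) := by
        rw [div_eq_div_iff] <;> [ring; positivity; positivity]
      rw [h]
      push_cast
      rfl

/-- consequence: `z^{s-1} - w^s = (s/2)(w^s - w^{s-1})`. -/
lemma iter3_zw (A : Matrix (Fin m) (Fin m) ℝ) (b w0 : Fin m → ℝ)
    (t : ℕ) (σ : Fin t → Fin m) :
    (iter3 A b w0 t σ).1 - (iter3 A b w0 t σ).2.2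
      = ((t : ℝ)/2) • ((iter3 A b w0 t σ).2.2 - (iter3 A b w0 t σ).2.1) := by
  have h := iter3_inv A b w0 t σ
  set z := (iter3 A b w0 t σ).1
  set wp := (iter3 A b w0 t σ).2.1
  set w := (iter3 A b w0 t σ).2.2
  funext j
  have hj := congrFun h j
  simp only [Pi.add_apply, Pi.smul_apply, Pi.sub_apply, smul_eq_mul] at hj ⊢
  have h2 : ((t : ℝ) + 2) ≠ 0 := by positivity
  field_simp at hj ⊢
  nlinarith [hj]

lemma iter3_snoc_fst (A : Matrix (Fin m) (Fin m) ℝ) (b w0 : Fin m → ℝ)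
    (s : ℕ) (g : Fin s → Fin m) (x : Fin m) :
    (iter3 A b w0 (s+1) (Fin.snoc g x)).1
      = (iter3 A b w0 s g).1 - (1/2 : ℝ) •
          (((A *ᵥ (iter3 A b w0 s g).2.2 - b) x / A x x) • (Pi.single x 1 : Fin m → ℝ)) := by
  simp only [iter3, Fin.snoc_castSucc, Fin.snoc_last]

lemma iter3_snoc_snd (A : Matrix (Fin m) (Fin m) ℝ) (b w0 : Fin m → ℝ)
    (s : ℕ) (g : Fin s → Fin m) (x : Fin m) :
    (iter3 A b w0 (s+1) (Fin.snoc g x)).2.1 = (iter3 A b w0 s g).2.2 := by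
  simp only [iter3, Fin.snoc_castSucc, Fin.snoc_last]

lemma trace_eq_sum (A : Matrix (Fin m) (Fin m) ℝ) : A.trace = ∑ i, A i i := rfl

lemma sum_probs (A : Matrix (Fin m) (Fin m) ℝ) (htr : A.trace ≠ 0) :
    ∑ i : Fin m, A i i / A.trace = 1 := by
  rw [← Finset.sum_div, ← trace_eq_sum, div_self htr]

lemma sum_probs_ratio (A : Matrix (Fin m) (Fin m) ℝ) (hd : ∀ i : Fin m, A i i ≠ 0)
    (r : Fin m → ℝ) (c : ℝ) :
    ∑ i : Fin m, (A i i / A.trace) * (c * (r i)^2 / A i i)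
      = c / A.trace * (r ⬝ᵥ r) := by
  have : ∀ i : Fin m, (A i i / A.trace) * (c * (r i)^2 / A i i)
      = c / A.trace * (r i * r i) := by
    intro i
    have h1 : (A i i / A.trace) * (c * (r i)^2 / A i i)
        = (A i i / A i i) * (c * (r i * r i) / A.trace) := by ring
    rw [h1, div_self (hd i), one_mul]
    rw [div_mul_eq_mul_div, mul_div_assoc, mul_div_assoc]
  rw [Finset.sum_congr rfl fun i _ => this i, ← Finset.mul_sum]
  rfl

/-- The main potential (Lyapunov) induction. -/
lemma phi_le (A : Matrix (Fin m) (Fin m) ℝ) (hA : A.PosDef)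
    (b ws w0 : Fin m → ℝ) (hb : A *ᵥ ws = b) (htr : 0 < A.trace) :
    ∀ s : ℕ, (∑ σ : Fin s → Fin m, (∏ k, A (σ k) (σ k) / A.trace) *
      (normSqW A ((iter3 A b w0 s σ).1 - ws)
        + (s : ℝ)/(4*A.trace) *
          ((A *ᵥ (iter3 A b w0 s σ).2.1 - b) ⬝ᵥ (A *ᵥ (iter3 A b w0 s σ).2.1 - b))))
      ≤ normSqW A (w0 - ws) := by
  intro s
  induction s with
  | zero =>
      rw [Fintype.sum_unique]
      show (∏ _k : Fin 0, _) * (normSqW A (w0 - ws) + _) ≤ _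
      simp
  | succ s ih =>
      refine le_trans ?_ ih
      rw [← Equiv.sum_comp (Fin.snocEquiv (fun _ => Fin m))]
      rw [Fintype.sum_prod_type, Finset.sum_comm]
      refine Finset.sum_le_sum fun g _ => ?_
      have hsnoc : ∀ (x : Fin m) (g : Fin s → Fin m),
          (Fin.snocEquiv (fun _ => Fin m)) (x, g) = Fin.snoc g x := fun _ _ => rfl
      simp only [hsnoc]
      set Z := (iter3 A b w0 s g).1 with hZ
      set WP := (iter3 A b w0 s g).2.1 with hWP
      set W := (iter3 A b w0 s g).2.2 with hW
      have hprod : ∀ x : Fin m,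
          (∏ k : Fin (s+1), A (Fin.snoc (α := fun _ => Fin m) g x k)
              (Fin.snoc (α := fun _ => Fin m) g x k) / A.trace)
            = (∏ k, A (g k) (g k) / A.trace) * (A x x / A.trace) := by
        intro x
        rw [Fin.prod_univ_castSucc]
        simp only [Fin.snoc_castSucc, Fin.snoc_last]
      have hd : ∀ i : Fin m, A i i ≠ 0 := fun i => (diag_pos hA i).ne'
      have hzw : Z - W = ((s : ℝ)/2) • (W - WP) := iter3_zw A b w0 s g
      have hstep : ∀ x : Fin m,
          normSqW A ((iter3 A b w0 (s+1) (Fin.snoc g x)).1 - ws)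
            ≤ normSqW A (Z - ws) + ((s : ℝ)/4) * ((A *ᵥ WP - b) x)^2 / A x x
              - (((s : ℝ)+1)/4) * ((A *ᵥ W - b) x)^2 / A x x := by
        intro x
        rw [iter3_snoc_fst]
        have := step_ineq A hA b ws hb s Z WP W hzw x
        linarith
      -- the inner expectation over the fresh index
      calc ∑ x : Fin m,
            (∏ k : Fin (s+1), A (Fin.snoc (α := fun _ => Fin m) g x k)
                (Fin.snoc (α := fun _ => Fin m) g x k) / A.trace) *
            (normSqW A ((iter3 A b w0 (s+1) (Fin.snoc g x)).1 - ws)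
              + ((s+1 : ℕ) : ℝ)/(4*A.trace) *
                ((A *ᵥ (iter3 A b w0 (s+1) (Fin.snoc g x)).2.1 - b) ⬝ᵥ
                 (A *ᵥ (iter3 A b w0 (s+1) (Fin.snoc g x)).2.1 - b)))
          ≤ ∑ x : Fin m,
            (∏ k, A (g k) (g k) / A.trace) * ((A x x / A.trace) *
              ((normSqW A (Z - ws) + ((s : ℝ)/4) * ((A *ᵥ WP - b) x)^2 / A x x
                - (((s : ℝ)+1)/4) * ((A *ᵥ W - b) x)^2 / A x x)
               + ((s : ℝ)+1)/(4*A.trace) * ((A *ᵥ W - b) ⬝ᵥ (A *ᵥ W - b)))) := by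
            refine Finset.sum_le_sum fun x _ => ?_
            rw [hprod x, iter3_snoc_snd, mul_assoc]
            have hp0 : 0 ≤ ∏ k, A (g k) (g k) / A.trace :=
              Finset.prod_nonneg fun k _ => div_nonneg (diag_pos hA _).le htr.le
            refine mul_le_mul_of_nonneg_left ?_ hp0
            have hpx : 0 ≤ A x x / A.trace := div_nonneg (diag_pos hA x).le htr.le
            refine mul_le_mul_of_nonneg_left ?_ hpx
            have := hstep x
            push_cast
            rw [← hW]
            linarith
        _ = (∏ k, A (g k) (g k) / A.trace) *
              (normSqW A (Z - ws) + (s : ℝ)/(4*A.trace) *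
                ((A *ᵥ WP - b) ⬝ᵥ (A *ᵥ WP - b))) := by
            rw [← Finset.mul_sum]
            congr 1
            have expand : ∀ x : Fin m, (A x x / A.trace) *
                ((normSqW A (Z - ws) + ((s : ℝ)/4) * ((A *ᵥ WP - b) x)^2 / A x x
                  - (((s : ℝ)+1)/4) * ((A *ᵥ W - b) x)^2 / A x x)
                 + ((s : ℝ)+1)/(4*A.trace) * ((A *ᵥ W - b) ⬝ᵥ (A *ᵥ W - b)))
              = (A x x / A.trace) * (normSqW A (Z - ws)
                    + ((s : ℝ)+1)/(4*A.trace) * ((A *ᵥ W - b) ⬝ᵥ (A *ᵥ W - b)))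
                + (A x x / A.trace) * (((s : ℝ)/4) * ((A *ᵥ WP - b) x)^2 / A x x)
                - (A x x / A.trace) * ((((s : ℝ)+1)/4) * ((A *ᵥ W - b) x)^2 / A x x) := by
              intro x; ring
            rw [Finset.sum_congr rfl fun x _ => expand x]
            rw [Finset.sum_sub_distrib, Finset.sum_add_distrib]
            rw [← Finset.sum_mul, sum_probs A htr.ne']
            rw [sum_probs_ratio A hd (A *ᵥ WP - b) ((s : ℝ)/4)]
            rw [sum_probs_ratio A hd (A *ᵥ W - b) (((s : ℝ)+1)/4)]
            have h4 : (4 : ℝ) * A.trace ≠ 0 := by positivity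
            field_simp
            try ring

end CDMomAux

open CDMomAux in
/-- **Complexity of coordinate descent with momentum (Corollary 2,
(eq:complexsublinearCD)):** with probabilities `p_i = A_{ii}/tr(A)`, `η = 1/2` and
`ζ_k = k/2`, if `t ≥ 4 tr(A)/ε` then `E[‖A wᵗ − b‖²] ≤ ε ‖w⁰ − w*‖²_A`. -/
theorem cd_momentum_complexity {m : ℕ}
    (A : Matrix (Fin m) (Fin m) ℝ) (hA : A.PosDef)
    (b wstar : Fin m → ℝ) (hwstar : wstar = A⁻¹ *ᵥ b)
    (w0 : Fin m → ℝ) (ε : ℝ) (hε : 0 < ε)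
    (t : ℕ) (ht : 4 * A.trace / ε ≤ (t : ℝ)) :
    ∑ σ : Fin t → Fin m, (∏ k, (A (σ k) (σ k) / A.trace)) *
        ((A *ᵥ (cdMomIter A b w0 t σ).2 - b) ⬝ᵥ (A *ᵥ (cdMomIter A b w0 t σ).2 - b))
      ≤ ε * normSqW A (w0 - wstar) := by
  classical
  rcases Nat.eq_zero_or_pos m with hm | hm
  · subst hm
    simp [normSqW, dotProduct]
  have hne : Nonempty (Fin m) := ⟨⟨0, hm⟩⟩
  have htr : 0 < A.trace := by
    rw [Matrix.trace]
    exact Finset.sum_pos (fun i _ => diag_pos hA i) Finset.univ_nonempty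
  have hb : A *ᵥ wstar = b := by
    rw [hwstar, Matrix.mulVec_mulVec,
      Matrix.mul_nonsing_inv A (isUnit_iff_ne_zero.mpr hA.det_pos.ne'), Matrix.one_mulVec]
  have htR : (0:ℝ) < t := lt_of_lt_of_le (by positivity) ht
  have hC : 0 ≤ normSqW A (w0 - wstar) := nA_nonneg hA.posSemidef _
  have hεt : 4 * A.trace / (t:ℝ) ≤ ε := by
    rw [div_le_iff₀ htR]
    have h1 : 4 * A.trace ≤ (t:ℝ) * ε := (div_le_iff₀ hε).mp ht
    linarith
  have hpoint : ∀ σ : Fin t → Fin m,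
      ((A *ᵥ (iter3 A b w0 t σ).2.2 - b) ⬝ᵥ (A *ᵥ (iter3 A b w0 t σ).2.2 - b))
        ≤ (4 * A.trace / t) * (normSqW A ((iter3 A b w0 t σ).1 - wstar)
            + (t:ℝ)/(4*A.trace) *
              ((A *ᵥ (iter3 A b w0 t σ).2.1 - b) ⬝ᵥ (A *ᵥ (iter3 A b w0 t σ).2.1 - b))) := by
    intro σ
    set Z := (iter3 A b w0 t σ).1 with hZ
    set WP := (iter3 A b w0 t σ).2.1 with hWP
    set W := (iter3 A b w0 t σ).2.2 with hW
    set γ : ℝ := 2/((t:ℝ)+2) with hγ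
    have hinv : W = (1-γ) • WP + γ • Z := iter3_inv A b w0 t σ
    have hγ0 : 0 < γ := by rw [hγ]; positivity
    have hγ1 : γ ≤ 1 := by
      rw [hγ, div_le_one (by positivity)]
      linarith
    have hres : ∀ j, (A *ᵥ W - b) j
        = (1-γ) * ((A *ᵥ WP - b) j) + γ * ((A *ᵥ (Z - wstar)) j) := by
      intro j
      have h2 := congrFun (congrArg (fun v => A *ᵥ v) hinv) j
      simp only [Matrix.mulVec_add, Matrix.mulVec_smul, Pi.add_apply, Pi.smul_apply,
        smul_eq_mul] at h2
      have h3 : (A *ᵥ (Z - wstar)) j = (A *ᵥ Z) j - b j := by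
        rw [Matrix.mulVec_sub, hb]; rfl
      simp only [Pi.sub_apply]
      rw [h3]
      linear_combination h2
    have hconv : (A *ᵥ W - b) ⬝ᵥ (A *ᵥ W - b)
        ≤ (1-γ) * ((A *ᵥ WP - b) ⬝ᵥ (A *ᵥ WP - b))
          + γ * ((A *ᵥ (Z-wstar)) ⬝ᵥ (A *ᵥ (Z-wstar))) := by
      simp only [dotProduct, Finset.mul_sum]
      rw [← Finset.sum_add_distrib]
      refine Finset.sum_le_sum fun j _ => ?_
      rw [hres j]
      nlinarith [sq_nonneg ((A *ᵥ WP - b) j - (A *ᵥ (Z - wstar)) j), hγ0.le, hγ1,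
        mul_nonneg (mul_nonneg hγ0.le (sub_nonneg.mpr hγ1))
          (sq_nonneg ((A *ᵥ WP - b) j - (A *ᵥ (Z - wstar)) j))]
    have hspec : (A *ᵥ (Z - wstar)) ⬝ᵥ (A *ᵥ (Z - wstar))
        ≤ A.trace * normSqW A (Z - wstar) := mulVec_dot_le hA.posSemidef (Z - wstar)
    have hX : 0 ≤ normSqW A (Z - wstar) := nA_nonneg hA.posSemidef _
    have hR : 0 ≤ (A *ᵥ WP - b) ⬝ᵥ (A *ᵥ WP - b) := dot_self_nonneg _
    have hrw : (4 * A.trace / t) * (normSqW A (Z - wstar)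
        + (t:ℝ)/(4*A.trace) * ((A *ᵥ WP - b) ⬝ᵥ (A *ᵥ WP - b)))
        = (4 * A.trace / t) * normSqW A (Z - wstar)
          + ((A *ᵥ WP - b) ⬝ᵥ (A *ᵥ WP - b)) := by
      field_simp
    rw [hrw]
    have hγq : γ * A.trace ≤ 4 * A.trace / (t:ℝ) := by
      rw [hγ, div_mul_eq_mul_div, div_le_div_iff₀ (by positivity) htR]
      nlinarith [htr]
    have h1 := mul_le_mul_of_nonneg_left hspec hγ0.le
    have h2 := mul_le_mul_of_nonneg_right hγq hX
    nlinarith [h1, h2, hR, hγ0, hγ1, hX]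
  have hprodnn : ∀ σ : Fin t → Fin m, 0 ≤ ∏ k, A (σ k) (σ k) / A.trace :=
    fun σ => Finset.prod_nonneg fun k _ => div_nonneg (diag_pos hA _).le htr.le
  calc ∑ σ : Fin t → Fin m, (∏ k, (A (σ k) (σ k) / A.trace)) *
        ((A *ᵥ (cdMomIter A b w0 t σ).2 - b) ⬝ᵥ (A *ᵥ (cdMomIter A b w0 t σ).2 - b))
      = ∑ σ : Fin t → Fin m, (∏ k, (A (σ k) (σ k) / A.trace)) *
        ((A *ᵥ (iter3 A b w0 t σ).2.2 - b) ⬝ᵥ (A *ᵥ (iter3 A b w0 t σ).2.2 - b)) := by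
        refine Finset.sum_congr rfl fun σ _ => ?_
        rw [(iter3_fst_thd A b w0 t σ).2]
    _ ≤ ∑ σ : Fin t → Fin m, (∏ k, (A (σ k) (σ k) / A.trace)) *
        ((4 * A.trace / t) * (normSqW A ((iter3 A b w0 t σ).1 - wstar)
            + (t:ℝ)/(4*A.trace) *
              ((A *ᵥ (iter3 A b w0 t σ).2.1 - b) ⬝ᵥ (A *ᵥ (iter3 A b w0 t σ).2.1 - b)))) :=
        Finset.sum_le_sum fun σ _ => mul_le_mul_of_nonneg_left (hpoint σ) (hprodnn σ)
    _ = (4 * A.trace / t) * ∑ σ : Fin t → Fin m, (∏ k, (A (σ k) (σ k) / A.trace)) *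
        (normSqW A ((iter3 A b w0 t σ).1 - wstar)
            + (t:ℝ)/(4*A.trace) *
              ((A *ᵥ (iter3 A b w0 t σ).2.1 - b) ⬝ᵥ (A *ᵥ (iter3 A b w0 t σ).2.1 - b))) := by
        rw [Finset.mul_sum]
        exact Finset.sum_congr rfl fun σ _ => by ring
    _ ≤ (4 * A.trace / t) * normSqW A (w0 - wstar) :=
        mul_le_mul_of_nonneg_left (phi_le A hA b wstar w0 hb htr t) (by positivity)
    _ ≤ ε * normSqW A (w0 - wstar) := mul_le_mul_of_nonneg_right hεt hC
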